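/- For s = 0,…,3^{k−1}−1, the assignment x ↦ [[−1,−1,−1],[0,0,1],[0,1,0]], y ↦ [[0,0,1],[−1,−1,−1],[1,0,0]], z ↦ ζ_{3^k}^s·[[−1,−1,−1],[0,1,0],[1,0,0]] extends to a group homomorphism ς_s : P'_{8·3^k} → GL(3,ℂ), i.e., the matrices satisfy X² = (XY)² = Y², ZXZ⁻¹ = Y, ZYZ⁻¹ = XY, Z^{3^k} = I. -/
import Mathlib

noncomputable section

open Matrix

/-- ζ_n = e^{2πi/n}. -/
def zeta (n : ℕ) : ℂ := Complex.exp (2 * Real.pi * Complex.I / n)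

/-- ς_s(x). -/
def Xm : Matrix (Fin 3) (Fin 3) ℂ := !![-1, -1, -1; 0, 0, 1; 0, 1, 0]

/-- ς_s(y). -/
def Ym : Matrix (Fin 3) (Fin 3) ℂ := !![0, 0, 1; -1, -1, -1; 1, 0, 0]

/-- ς_s(z). -/
def Zm (k s : ℕ) : Matrix (Fin 3) (Fin 3) ℂ :=
  zeta (3 ^ k) ^ s • !![-1, -1, -1; 0, 1, 0; 1, 0, 0]

def Z0 : Matrix (Fin 3) (Fin 3) ℂ := !![-1, -1, -1; 0, 1, 0; 1, 0, 0]

lemma zeta_pow_self (n : ℕ) (hn : n ≠ 0) : zeta n ^ n = 1 := by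
  rw [zeta, ← Complex.exp_nat_mul]
  have hn' : (n:ℂ) ≠ 0 := by exact_mod_cast hn
  rw [show (n:ℂ) * (2 * Real.pi * Complex.I / n) = 2 * Real.pi * Complex.I by
    field_simp, Complex.exp_two_pi_mul_I]

lemma zeta_ne_zero (n : ℕ) : zeta n ≠ 0 := Complex.exp_ne_zero _

lemma Z0_cube : Z0 ^ 3 = 1 := by
  rw [pow_succ, pow_two]
  show Z0 * Z0 * Z0 = 1
  ext i j
  fin_cases i <;> fin_cases j <;> simp [Z0, Matrix.mul_apply, Fin.sum_univ_succ]

lemma det_Z0 : Z0.det = 1 := by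
  simp [Z0, Matrix.det_fin_three, Matrix.vecHead, Matrix.vecTail]

lemma det_Zm (k s : ℕ) : (Zm k s).det = zeta (3 ^ k) ^ (3 * s) := by
  rw [Zm, Matrix.det_smul]
  rw [show (!![-1, -1, -1; 0, 1, 0; 1, 0, 0] : Matrix (Fin 3) (Fin 3) ℂ) = Z0 from rfl, det_Z0]
  simp [pow_mul, mul_comm]

/-- The matrices defining ς_s satisfy the relations of P'_{8·3^k}. -/
theorem stmt12 (k s : ℕ) (hk : 2 ≤ k) (hs : s < 3 ^ (k - 1)) :
    Xm ^ 2 = (Xm * Ym) ^ 2 ∧ (Xm * Ym) ^ 2 = Ym ^ 2 ∧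
    Zm k s * Xm * (Zm k s)⁻¹ = Ym ∧ Zm k s * Ym * (Zm k s)⁻¹ = Xm * Ym ∧
    Zm k s ^ 3 ^ k = 1 := by
  have hdet : IsUnit (Zm k s).det := by
    rw [det_Zm]; exact (isUnit_iff_ne_zero.2 (pow_ne_zero _ (zeta_ne_zero _)))
  have : Invertible (Zm k s) := (Zm k s).invertibleOfIsUnitDet hdet
  have hZX : Zm k s * Xm = Ym * Zm k s := by
    rw [Zm, Matrix.smul_mul, Matrix.mul_smul]
    congr 1
    ext i j
    fin_cases i <;> fin_cases j <;>
      simp [Xm, Ym, Matrix.mul_apply, Fin.sum_univ_succ]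
  have hZY : Zm k s * Ym = (Xm * Ym) * Zm k s := by
    rw [Zm, Matrix.smul_mul, Matrix.mul_smul]
    congr 1
    ext i j
    fin_cases i <;> fin_cases j <;>
      simp [Xm, Ym, Matrix.mul_apply, Fin.sum_univ_succ]
  refine ⟨?_, ?_, ?_, ?_, ?_⟩
  · ext i j
    fin_cases i <;> fin_cases j <;>
      simp [Xm, Ym, pow_two, Matrix.mul_apply, Fin.sum_univ_succ]
  · ext i j
    fin_cases i <;> fin_cases j <;>
      simp [Xm, Ym, pow_two, Matrix.mul_apply, Fin.sum_univ_succ]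
  · rw [Matrix.mul_inv_eq_iff_eq_mul_of_invertible]; exact hZX
  · rw [Matrix.mul_inv_eq_iff_eq_mul_of_invertible]; exact hZY
  · have hZ : Zm k s = zeta (3 ^ k) ^ s • Z0 := rfl
    rw [hZ, smul_pow, ← pow_mul]
    have h1 : zeta (3 ^ k) ^ (s * 3 ^ k) = 1 := by
      rw [mul_comm, pow_mul, zeta_pow_self _ (by positivity), one_pow]
    have h2 : Z0 ^ 3 ^ k = 1 := by
      have : 3 ^ k = 3 * 3 ^ (k - 1) := by
        rw [← pow_succ']
        congr 1; omega
      rw [this, pow_mul, Z0_cube, one_pow]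
    rw [h1, h2, one_smul]
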